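/- arXiv:2512.20767 — 3 statements merged into one kernel-verified Lean document; each statement's English description precedes it below -/
import Mathlib

section
/- Let G be a countable group and let μ be a Borel probability measure on Sub(G) that is invariant under the conjugation action of G (i.e. the pushforward of μ under H ↦ gHg^{-1} equals μ for every g ∈ G). Then μ-almost every subgroup is a boomerang subgroup of G: μ({H ∈ Sub(G) : H is a boomerang subgroup}) = 1. -/
open Filter

/-- The number of elements of `Γ` of word length at most `R`. -/
noncomputable def growthCount {d : ℕ} (Γ : Subgroup (FreeGroup (Fin d))) (R : ℕ) : ℕ :=
  Nat.card {g : FreeGroup (Fin d) // g ∈ Γ ∧ FreeGroup.norm g ≤ R}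

/-- The critical exponent `δ(Γ) = limsup_R log(c_Γ(R))/R`. -/
noncomputable def critExp {d : ℕ} (Γ : Subgroup (FreeGroup (Fin d))) : ℝ :=
  Filter.atTop.limsup fun R : ℕ => Real.log (growthCount Γ R : ℝ) / (R : ℝ)

/-- Chabauty convergence of a sequence of subgroups. -/
def ChabautyTendsto {G : Type*} [Group G] (H : ℕ → Subgroup G) (L : Subgroup G) : Prop :=
  ∀ g : G, ∀ᶠ n in Filter.atTop, (g ∈ H n ↔ g ∈ L)

/-- A boomerang subgroup. -/
def IsBoomerang {G : Type*} [Group G] (Δ : Subgroup G) : Prop :=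
  ∀ g : G, ∃ n : ℕ → ℕ, StrictMono n ∧
    ChabautyTendsto (fun k => Subgroup.map (MulAut.conj (g ^ n k)).toMonoidHom Δ) Δ

/-- The Chabauty topology on the space of subgroups of `G`, induced from the
product topology on `G → Bool` via the characteristic function of membership. -/
noncomputable instance chabautyTopology (G : Type*) [Group G] :
    TopologicalSpace (Subgroup G) :=
  TopologicalSpace.induced
    (fun (H : Subgroup G) (g : G) => @decide (g ∈ H) (Classical.propDecidable _))
    inferInstance

noncomputable instance chabautyMeasurableSpace (G : Type*) [Group G] :
    MeasurableSpace (Subgroup G) :=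
  borel (Subgroup G)

/-!
For each `g`, conjugation by `g` is a continuous, hence measurable, self-map of the second
countable space `Sub(G)` preserving the probability measure `μ`. By Poincaré recurrence
`μ`-almost every `H` is a cluster point of its orbit `gⁿ H g⁻ⁿ`, and since `Sub(G)` is first
countable this means that a subsequence of the orbit Chabauty-converges to `H`. As `G` is
countable, the almost-sure statements for the individual `g` combine into one.
-/

open MeasureTheory Topology

section Chabauty

variable {G : Type*} [Group G]

variable (G) in
lemma isInducing_decide_mem :
    IsInducing fun (H : Subgroup G) (g : G) => @decide (g ∈ H) (Classical.propDecidable _) :=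
  ⟨rfl⟩

instance [Countable G] : SecondCountableTopology (Subgroup G) :=
  (isInducing_decide_mem G).secondCountableTopology

instance : BorelSpace (Subgroup G) := ⟨rfl⟩

lemma chabautyTendsto_iff_tendsto {H : ℕ → Subgroup G} {L : Subgroup G} :
    ChabautyTendsto H L ↔ Tendsto H atTop (𝓝 L) := by
  simp only [(isInducing_decide_mem G).tendsto_nhds_iff, tendsto_pi_nhds, nhds_discrete,
    tendsto_pure, Function.comp_apply, decide_eq_decide, ChabautyTendsto]

lemma mem_map_conj {a x : G} {H : Subgroup G} :
    x ∈ H.map (MulAut.conj a).toMonoidHom ↔ a⁻¹ * x * a ∈ H :=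
  Subgroup.mem_map_equiv

lemma map_conj_iterate (g : G) (n : ℕ) (H : Subgroup G) :
    (fun K : Subgroup G => K.map (MulAut.conj g).toMonoidHom)^[n] H =
      H.map (MulAut.conj (g ^ n)).toMonoidHom := by
  induction n with
  | zero => ext; simp
  | succ n ih =>
    rw [Function.iterate_succ_apply', ih, Subgroup.map_map, pow_succ', map_mul]
    rfl

lemma continuous_map_conj (g : G) :
    Continuous fun K : Subgroup G => K.map (MulAut.conj g).toMonoidHom := by
  refine (isInducing_decide_mem G).continuous_iff.2 (continuous_pi fun x => ?_)
  convert (continuous_apply (g⁻¹ * x * g)).comp (isInducing_decide_mem G).continuous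
    using 2 with K
  exact decide_eq_decide.2 mem_map_conj

lemma isBoomerang_iff_forall_mapClusterPt [Countable G] {Δ : Subgroup G} :
    IsBoomerang Δ ↔
      ∀ g : G, MapClusterPt Δ atTop fun n => Δ.map (MulAut.conj (g ^ n)).toMonoidHom := by
  refine forall_congr' fun g => ⟨fun ⟨ψ, hψ, hlim⟩ => ?_, fun h => ?_⟩
  · exact .of_comp hψ.tendsto_atTop (chabautyTendsto_iff_tendsto.1 hlim).mapClusterPt
  · obtain ⟨ψ, hψ, hlim⟩ := h.tendsto_subseq
    exact ⟨ψ, hψ, chabautyTendsto_iff_tendsto.2 hlim⟩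

end Chabauty

theorem irs_ae_boomerang (G : Type*) [Group G] [Countable G]
    (μ : MeasureTheory.Measure (Subgroup G)) [MeasureTheory.IsProbabilityMeasure μ]
    (hinv : ∀ (g : G) (s : Set (Subgroup G)), MeasurableSet s →
      μ ((fun H => Subgroup.map (MulAut.conj g).toMonoidHom H) ⁻¹' s) = μ s) :
    μ {H : Subgroup G | IsBoomerang H} = 1 := by
  have recurrent (g : G) : ∀ᵐ H ∂μ,
      MapClusterPt H atTop fun n => H.map (MulAut.conj (g ^ n)).toMonoidHom := by
    have hmeas := (continuous_map_conj g).measurable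
    have hpres :
        MeasurePreserving (fun H : Subgroup G => H.map (MulAut.conj g).toMonoidHom) μ μ :=
      ⟨hmeas, Measure.ext fun s hs => (Measure.map_apply hmeas hs).trans (hinv g s hs)⟩
    filter_upwards [hpres.conservative.ae_frequently_mem_of_mem_nhds] with H hH
    simpa only [mapClusterPt_iff_frequently, map_conj_iterate] using hH
  have hae : ∀ᵐ H ∂μ, IsBoomerang H := by
    simpa only [isBoomerang_iff_forall_mapClusterPt] using ae_all_iff.2 recurrent
  exact (measure_congr (ae_eq_univ.2 (ae_iff.1 hae))).trans measure_univ
end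

section
/- Let d ≥ 2 and let Γ be a subgroup of F_d. Then δ(Γ) = 0 if and only if Γ is cyclic, i.e. generated by a single element (possibly trivial). -/
open Filter

/-!
A cyclic subgroup `⟨g⟩` grows linearly: writing `g.toWord = c r c⁻¹` with `r` cyclically reduced,
`g ^ n` is the reduced word `c rⁿ c⁻¹`, so `|k| ≤ |g ^ k|` and `c_⟨g⟩(R) ≤ 2R + 1`. A non-cyclic
subgroup is free (Nielsen–Schreier) on a basis with two distinct elements `a, b`; the `2ⁿ` positive
words of length `n` in `a, b` are distinct elements of word length at most `n · max |a| |b|`, so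
`δ(Γ) ≥ log 2 / max |a| |b| > 0`.
-/

open Topology

theorem Real.log_natCast_le_log_natCast {m n : ℕ} (h : m ≤ n) : Real.log m ≤ Real.log n := by
  rcases m.eq_zero_or_pos with rfl | hm
  · simpa using Real.log_natCast_nonneg n
  · exact Real.log_le_log (by exact_mod_cast hm) (by exact_mod_cast h)

theorem tendsto_log_two_mul_add_one_div :
    Tendsto (fun R : ℕ => Real.log (2 * R + 1) / R) atTop (𝓝 0) := by
  have h := (Real.tendsto_pow_log_div_mul_add_atTop (1 / 2) (-1 / 2) 1 (by norm_num)).comp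
    (tendsto_atTop_add_const_right _ 1
      (tendsto_natCast_atTop_atTop.const_mul_atTop (zero_lt_two' ℝ)))
  refine h.congr fun R => ?_
  simp only [Function.comp_apply, pow_one]
  ring_nf

namespace FreeGroup

variable {α : Type*}

theorem le_norm_pow [DecidableEq α] {g : FreeGroup α} (hg : g ≠ 1) (n : ℕ) :
    n ≤ norm (g ^ n) := by
  rcases eq_or_ne n 0 with rfl | hn
  · exact Nat.zero_le _
  have hcyc : reduceCyclically g.toWord ≠ [] := by
    intro h
    apply hg
    rw [← mk_toWord (x := g), ← reduceCyclically.conj_conjugator_reduceCyclically g.toWord, h,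
      List.append_nil, ← mul_mk, ← inv_mk, mul_inv_cancel, one_eq_mk]
  have hlen : 1 ≤ (reduceCyclically g.toWord).length := List.length_pos_iff.mpr hcyc
  rw [norm, toWord_pow, reduceCyclically.reduce_flatten_replicate isReduced_toWord, if_neg hn]
  simp only [List.length_append, List.length_flatten, List.map_replicate, List.sum_replicate,
    smul_eq_mul]
  nlinarith

theorem natAbs_le_norm_zpow [DecidableEq α] {g : FreeGroup α} (hg : g ≠ 1) (k : ℤ) :
    k.natAbs ≤ norm (g ^ k) := by
  obtain ⟨n, rfl | rfl⟩ := Int.eq_nat_or_neg k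
  · simpa using le_norm_pow hg n
  · simpa [zpow_neg, norm_inv_eq] using le_norm_pow hg n

theorem norm_list_prod_le [DecidableEq α] (l : List (FreeGroup α)) :
    norm l.prod ≤ (l.map norm).sum := by
  induction l with
  | nil => simp
  | cons g l ih =>
    rw [List.prod_cons, List.map_cons, List.sum_cons]
    exact (norm_mul_le _ _).trans (Nat.add_le_add_left ih _)

theorem list_prod_map_of (l : List α) : (l.map of).prod = mk (l.map (·, true)) := by
  induction l with
  | nil => rfl
  | cons a l ih => rw [List.map_cons, List.prod_cons, ih, of, mul_mk]; rfl

theorem isReduced_map_true (l : List α) : IsReduced (l.map (·, true)) := by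
  simp only [IsReduced, List.isChain_map, implies_true]
  exact List.isChain_iff_getElem.mpr fun _ _ => trivial

theorem injective_list_prod_map_of : Function.Injective fun l : List α => (l.map of).prod := by
  classical
  intro l l' h
  have h' := congrArg toWord h
  simp only [list_prod_map_of, toWord_mk, (isReduced_map_true _).reduce_eq] at h'
  exact List.map_injective_iff.mpr (Prod.mk_left_injective true) h'

theorem finite_setOf_norm_le [Finite α] [DecidableEq α] (R : ℕ) :
    {g : FreeGroup α | norm g ≤ R}.Finite :=
  (List.finite_length_le _ R).preimage toWord_injective.injOn

theorem ncard_setOf_norm_le_le [Fintype α] [DecidableEq α] (R : ℕ) :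
    {g : FreeGroup α | norm g ≤ R}.ncard ≤ (2 * Fintype.card α + 1) ^ R := by
  calc _ ≤ (Set.univ : Set (Fin R → Option (α × Bool))).ncard := by
        refine Set.ncard_le_ncard_of_injOn (fun g k => g.toWord[(k : ℕ)]?) (fun _ _ => trivial)
          fun x (hx : norm x ≤ R) y (hy : norm y ≤ R) h =>
            toWord_injective (List.ext_getElem? fun i => ?_)
        by_cases hi : i < R
        · exact congrFun h ⟨i, hi⟩
        · rw [List.getElem?_eq_none (hx.trans (not_lt.mp hi)),
            List.getElem?_eq_none (hy.trans (not_lt.mp hi))]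
    _ = _ := by simp [Set.ncard_univ, Nat.card_eq_fintype_card]; ring

end FreeGroup

theorem FreeGroupBasis.injective_list_prod_map {ι G : Type*} [Group G] (b : FreeGroupBasis ι G) :
    Function.Injective fun l : List ι => (l.map b).prod := by
  intro l l' h
  have h' := congrArg b.repr h
  simp only [map_list_prod, List.map_map, Function.comp_def, repr_apply_coe] at h'
  exact FreeGroup.injective_list_prod_map_of h'

theorem FreeGroupBasis.isCyclic {ι G : Type*} [Group G] [Subsingleton ι]
    (b : FreeGroupBasis ι G) : IsCyclic G := by
  rcases isEmpty_or_nonempty ι with hι | ⟨⟨i⟩⟩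
  · have := b.repr.toEquiv.subsingleton
    exact isCyclic_of_subsingleton
  · have := uniqueOfSubsingleton i
    exact b.repr.isCyclic.mpr inferInstance

section CriticalExponent

variable {d : ℕ} (Γ : Subgroup (FreeGroup (Fin d)))

theorem growthCount_eq_ncard (R : ℕ) :
    growthCount Γ R = {g | g ∈ Γ ∧ FreeGroup.norm g ≤ R}.ncard :=
  Nat.card_coe_set_eq _

theorem finite_setOf_mem_norm_le (R : ℕ) : {g | g ∈ Γ ∧ FreeGroup.norm g ≤ R}.Finite :=
  (FreeGroup.finite_setOf_norm_le R).subset fun _ hg => hg.2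

theorem growthCount_le_pow (R : ℕ) : growthCount Γ R ≤ (2 * d + 1) ^ R := by
  rw [growthCount_eq_ncard]
  calc _ ≤ {g : FreeGroup (Fin d) | FreeGroup.norm g ≤ R}.ncard :=
        Set.ncard_le_ncard (fun _ hg => hg.2) (FreeGroup.finite_setOf_norm_le R)
    _ ≤ _ := by simpa using FreeGroup.ncard_setOf_norm_le_le (α := Fin d) R

theorem log_growthCount_div_le (R : ℕ) :
    Real.log (growthCount Γ R) / R ≤ Real.log (2 * d + 1) := by
  have hlog : 0 ≤ Real.log (2 * d + 1) := Real.log_nonneg (by linarith [d.cast_nonneg (α := ℝ)])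
  rcases R.eq_zero_or_pos with rfl | hR
  · simpa using hlog
  rw [div_le_iff₀ (by exact_mod_cast hR)]
  calc Real.log (growthCount Γ R) ≤ Real.log (((2 * d + 1) ^ R : ℕ) : ℝ) :=
        Real.log_natCast_le_log_natCast (growthCount_le_pow Γ R)
    _ = Real.log (2 * d + 1) * R := by push_cast; rw [Real.log_pow, mul_comm]

theorem isBoundedUnder_log_growthCount_div :
    IsBoundedUnder (· ≤ ·) atTop fun R : ℕ => Real.log (growthCount Γ R) / R :=
  isBoundedUnder_of ⟨_, log_growthCount_div_le Γ⟩

theorem critExp_eq_zero_of_growthCount_le (h : ∀ R, growthCount Γ R ≤ 2 * R + 1) :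
    critExp Γ = 0 := by
  refine (squeeze_zero (fun R => div_nonneg (Real.log_natCast_nonneg _) R.cast_nonneg)
    (fun R => ?_) tendsto_log_two_mul_add_one_div).limsup_eq
  refine div_le_div_of_nonneg_right ?_ R.cast_nonneg
  exact_mod_cast Real.log_natCast_le_log_natCast (h R)

theorem le_critExp_of_pow_le_growthCount {a C : ℕ} (hC : 0 < C)
    (h : ∀ n, a ^ n ≤ growthCount Γ (C * n)) : Real.log a / C ≤ critExp Γ := by
  refine le_limsup_of_frequently_le (frequently_atTop.mpr fun N => ⟨C * (N + 1), ?_, ?_⟩)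
    (isBoundedUnder_log_growthCount_div Γ)
  · nlinarith
  · calc Real.log a / C = Real.log ((a ^ (N + 1) : ℕ) : ℝ) / (C * (N + 1) : ℕ) := by
          rw [Nat.cast_pow, Real.log_pow]
          push_cast
          field_simp
      _ ≤ _ := div_le_div_of_nonneg_right (Real.log_natCast_le_log_natCast (h _)) (by positivity)

theorem growthCount_zpowers_le (g : FreeGroup (Fin d)) (R : ℕ) :
    growthCount (Subgroup.zpowers g) R ≤ 2 * R + 1 := by
  rw [growthCount_eq_ncard]
  calc _ ≤ ((g ^ · : ℤ → FreeGroup (Fin d)) '' Set.Icc (-R : ℤ) R).ncard := by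
        refine Set.ncard_le_ncard ?_ (Set.toFinite _)
        rintro x ⟨hx, hxR⟩
        obtain ⟨k, rfl⟩ := Subgroup.mem_zpowers_iff.mp hx
        rcases eq_or_ne g 1 with rfl | hg
        · exact ⟨0, by simp, by simp⟩
        · have := FreeGroup.natAbs_le_norm_zpow hg k
          exact ⟨k, by constructor <;> omega, rfl⟩
    _ ≤ (Set.Icc (-R : ℤ) R).ncard := Set.ncard_image_le (Set.finite_Icc _ _)
    _ = 2 * R + 1 := by rw [Set.ncard_eq_toFinset_card', Set.toFinset_Icc, Int.card_Icc]; omega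

theorem pow_le_growthCount_of_basis {ι : Type*} (b : FreeGroupBasis ι Γ) {i j : ι} (hij : i ≠ j)
    (n : ℕ) :
    2 ^ n ≤ growthCount Γ (max (FreeGroup.norm (b i).1) (FreeGroup.norm (b j).1) * n) := by
  set C := max (FreeGroup.norm (b i).1) (FreeGroup.norm (b j).1)
  set idx : Bool → ι := fun t => if t then i else j
  have hidx : Function.Injective idx := Bool.injective_iff.mpr (by simpa [idx] using hij.symm)
  set word : (Fin n → Bool) → FreeGroup (Fin d) := fun v => (((List.ofFn v).map idx).map b).prod
  have hword : Function.Injective word := Subtype.val_injective.comp <|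
    b.injective_list_prod_map.comp <| (List.map_injective_iff.mpr hidx).comp List.ofFn_injective
  have hnorm (v : Fin n → Bool) : FreeGroup.norm (word v) ≤ C * n := by
    set L := (((List.ofFn v).map idx).map b).map Subtype.val
    have hL : ∀ m ∈ L.map FreeGroup.norm, m ≤ C := by
      simp only [L, List.map_map, List.mem_map, List.mem_ofFn]
      rintro _ ⟨t, -, rfl⟩
      cases t
      · exact le_max_right _ _
      · exact le_max_left _ _
    calc FreeGroup.norm (word v) ≤ (L.map FreeGroup.norm).sum := by
          simpa only [word, Subgroup.val_list_prod] using FreeGroup.norm_list_prod_le L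
      _ ≤ C * n := (List.sum_le_card_nsmul _ C hL).trans_eq (by simp [L, mul_comm])
  rw [growthCount_eq_ncard]
  calc 2 ^ n = (Set.univ : Set (Fin n → Bool)).ncard := by simp [Set.ncard_univ]
    _ ≤ _ := Set.ncard_le_ncard_of_injOn word
        (fun v _ => Set.mem_ofPred.mpr ⟨Subtype.prop _, hnorm v⟩) hword.injOn
        (finite_setOf_mem_norm_le Γ _)

theorem critExp_pos_of_not_isCyclic (hΓ : ¬ IsCyclic Γ) : 0 < critExp Γ := by
  obtain ⟨ι, ⟨b⟩⟩ := (subgroupIsFreeOfIsFree Γ).nonempty_basis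
  obtain ⟨i, j, hij⟩ : ∃ i j : ι, i ≠ j := by
    by_contra! h
    have : Subsingleton ι := ⟨h⟩
    exact hΓ b.isCyclic
  have hbi : FreeGroup.norm (b i).1 ≠ 0 := by
    rw [Ne, FreeGroup.norm_eq_zero, OneMemClass.coe_eq_one, ← b.repr.injective.eq_iff,
      FreeGroupBasis.repr_apply_coe, map_one]
    exact FreeGroup.of_ne_one i
  have hC := (Nat.pos_of_ne_zero hbi).trans_le (le_max_left _ (FreeGroup.norm (b j).1))
  refine lt_of_lt_of_le ?_ <|
    le_critExp_of_pow_le_growthCount Γ hC (pow_le_growthCount_of_basis Γ b hij)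
  have : (0 : ℝ) < Real.log (2 : ℕ) := by norm_num [Real.log_pos]
  positivity

end CriticalExponent

theorem critExp_eq_zero_iff_cyclic_general (d : ℕ) (Γ : Subgroup (FreeGroup (Fin d))) :
    critExp Γ = 0 ↔ ∃ g : FreeGroup (Fin d), Γ = Subgroup.closure {g} := by
  simp_rw [← Subgroup.zpowers_eq_closure, eq_comm (a := Γ), ← Γ.isCyclic_iff_exists_zpowers_eq_top]
  refine ⟨fun h => by_contra fun hΓ => (critExp_pos_of_not_isCyclic Γ hΓ).ne' h, fun h => ?_⟩
  obtain ⟨g, rfl⟩ := Γ.isCyclic_iff_exists_zpowers_eq_top.mp h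
  exact critExp_eq_zero_of_growthCount_le _ (growthCount_zpowers_le g)

theorem critExp_eq_zero_iff_cyclic (d : ℕ) (hd : 2 ≤ d) (Γ : Subgroup (FreeGroup (Fin d))) :
    critExp Γ = 0 ↔ ∃ g : FreeGroup (Fin d), Γ = Subgroup.closure {g} :=
  critExp_eq_zero_iff_cyclic_general d Γ
end

section
/- For every natural number n ≥ 2 there exists a unique real number x in the open interval (0,1) with 2x^n + x − 1 = 0, and this root satisfies exp(−1/√n) ≤ x ≤ exp(−1/n). -/
open Filter

/-!
The left side `f(x) = 2x^n + x - 1` is strictly increasing on `[0, ∞)` with `f 0 = -1` and `f 1 = 2`,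
so it has exactly one root in `(0, 1)`, and a point lies below (above) the root exactly when `f` is
nonpositive (nonnegative) there. At `a = exp(-1/n)` we have `a^n = e⁻¹` and `a ≥ 1 - 1/n`, whence
`f a ≥ 2/e - 1/2 > 0`. At `b = exp(-1/t)` with `t = √n` we have `b^n = exp(-t)` and `b ≤ t/(t+1)`,
and `exp t ≥ 2t + 2` for `t ≥ √3` gives `f b ≤ 0`. That inequality fails at `t = √2`, so for `n = 2`
we use `b ≤ 1/2` instead.
-/

open Real Set

noncomputable def kwonParkPoly (n : ℕ) (x : ℝ) : ℝ := 2 * x ^ n + x - 1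

section Polynomial

variable {n : ℕ}

lemma kwonParkPoly_strictMonoOn (hn : n ≠ 0) : StrictMonoOn (kwonParkPoly n) (Ici 0) := by
  intro x hx y _ hxy
  have := pow_lt_pow_left₀ hxy hx hn
  unfold kwonParkPoly
  linarith

lemma existsUnique_kwonParkPoly_eq_zero (hn : n ≠ 0) :
    ∃! x : ℝ, x ∈ Ioo 0 1 ∧ kwonParkPoly n x = 0 := by
  have hcont : ContinuousOn (kwonParkPoly n) (Icc 0 1) := by
    unfold kwonParkPoly; fun_prop
  have hzero : (0 : ℝ) ∈ Ioo (kwonParkPoly n 0) (kwonParkPoly n 1) := by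
    simp [kwonParkPoly, zero_pow hn]
  obtain ⟨x, hx, hfx⟩ := intermediate_value_Ioo zero_le_one hcont hzero
  refine ⟨x, ⟨hx, hfx⟩, fun y ⟨hy, hfy⟩ => ?_⟩
  exact (kwonParkPoly_strictMonoOn hn).injOn (mem_Ici.2 hy.1.le) (mem_Ici.2 hx.1.le)
    (hfy.trans hfx.symm)

end Polynomial

lemma exp_neg_inv_le_div_add_one {t : ℝ} (ht : 0 < t) : exp (-1 / t) ≤ t / (t + 1) := by
  have h : 1 / t + 1 ≤ exp (1 / t) := add_one_le_exp _
  rw [neg_div, exp_neg, ← one_div]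
  calc 1 / exp (1 / t) ≤ 1 / (1 / t + 1) := one_div_le_one_div_of_le (by positivity) h
    _ = t / (t + 1) := by field_simp; ring

lemma two_le_exp_inv_sqrt_two : 2 ≤ exp (1 / √2) := by
  set s := 1 / √2
  have hs : 0 ≤ s := by positivity
  have hs2 : s ^ 2 = 1 / 2 := by simp [s]
  have htaylor := sum_le_exp_of_nonneg hs 4
  simp only [Finset.sum_range_succ, Finset.sum_range_zero, Nat.factorial] at htaylor
  -- with `s ^ 2 = 1 / 2` the cubic Taylor bound is `5 / 4 + 13 s / 12`, and `s ≥ 9 / 13`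
  nlinarith [sq_nonneg (s - 9 / 13)]

lemma two_mul_add_two_le_exp {t : ℝ} (ht : 0 ≤ t) (ht3 : 3 ≤ t ^ 2) : 2 * t + 2 ≤ exp t := by
  have htaylor := sum_le_exp_of_nonneg ht 6
  simp only [Finset.sum_range_succ, Finset.sum_range_zero, Nat.factorial] at htaylor
  nlinarith [sq_nonneg (t - 2), sq_nonneg (t - 1), pow_nonneg ht 3]

lemma two_mul_exp_neg_add_exp_neg_inv_le_one {t : ℝ} (ht : 0 < t) (ht3 : 3 ≤ t ^ 2) :
    2 * exp (-t) + exp (-1 / t) ≤ 1 := by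
  have hexp : exp (-t) ≤ 1 / (2 * t + 2) := by
    rw [exp_neg, ← one_div]
    exact one_div_le_one_div_of_le (by positivity) (two_mul_add_two_le_exp ht.le ht3)
  have hsum : 2 * (1 / (2 * t + 2)) + t / (t + 1) = 1 := by field_simp; ring
  linarith [exp_neg_inv_le_div_add_one ht]

section Bounds

variable {n : ℕ}

lemma kwonParkPoly_exp_neg_inv_sqrt_nonpos (hn : 2 ≤ n) :
    kwonParkPoly n (exp (-1 / √n)) ≤ 0 := by
  set t := √(n : ℝ) with ht_def
  have ht : 0 < t := by positivity
  have htn : t ^ 2 = n := sq_sqrt (Nat.cast_nonneg n)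
  unfold kwonParkPoly
  rcases hn.eq_or_lt with rfl | hn3
  · have hhalf : exp (-1 / t) ≤ 1 / 2 := by
      rw [neg_div, exp_neg, ← one_div]
      exact one_div_le_one_div_of_le (by norm_num) (by simpa [ht_def] using two_le_exp_inv_sqrt_two)
    nlinarith [exp_pos (-1 / t)]
  · have ht3 : 3 ≤ t ^ 2 := by rw [htn]; exact_mod_cast hn3
    have hpow : exp (-1 / t) ^ n = exp (-t) := by
      rw [← exp_nat_mul, ← htn]; field_simp
    rw [hpow]
    linarith [two_mul_exp_neg_add_exp_neg_inv_le_one ht ht3]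

lemma kwonParkPoly_exp_neg_inv_nonneg (hn : 2 ≤ n) :
    0 ≤ kwonParkPoly n (exp (-1 / n)) := by
  have hn2 : (2 : ℝ) ≤ n := by exact_mod_cast hn
  have hpow : exp (-1 / n) ^ n = exp (-1) := by
    rw [← exp_nat_mul]; field_simp
  have hlin : 1 - 1 / (n : ℝ) ≤ exp (-1 / n) := by
    rw [neg_div]; exact one_sub_le_exp_neg _
  have hinv : 1 / (n : ℝ) ≤ 1 / 2 := one_div_le_one_div_of_le (by norm_num) hn2
  unfold kwonParkPoly
  linarith [exp_neg_one_gt_d9]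

end Bounds

theorem root_of_kwon_park_polynomial (n : ℕ) (hn : 2 ≤ n) :
    (∃! x : ℝ, x ∈ Set.Ioo (0 : ℝ) 1 ∧ 2 * x ^ n + x - 1 = 0) ∧
    ∀ x : ℝ, x ∈ Set.Ioo (0 : ℝ) 1 → 2 * x ^ n + x - 1 = 0 →
      Real.exp (-1 / Real.sqrt (n : ℝ)) ≤ x ∧ x ≤ Real.exp (-1 / (n : ℝ)) := by
  have hn0 : n ≠ 0 := by omega
  have hmono := kwonParkPoly_strictMonoOn hn0
  refine ⟨existsUnique_kwonParkPoly_eq_zero hn0, fun x hx hfx => ⟨?_, ?_⟩⟩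
  · refine (hmono.le_iff_le (exp_pos _).le hx.1.le).1 ?_
    exact (kwonParkPoly_exp_neg_inv_sqrt_nonpos hn).trans hfx.ge
  · refine (hmono.le_iff_le hx.1.le (exp_pos _).le).1 ?_
    exact hfx.le.trans (kwonParkPoly_exp_neg_inv_nonneg hn)
end
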